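/- arXiv:1410.3197 — 6 statements merged into one kernel-verified Lean document; each statement's English description precedes it below -/
import Mathlib

section
/- Let B = C*DC ∈ ℂ^{n×n} with C nonsingular and D = diag(d_1,…,d_n), and define ⟨B⟩ = C*|D|C where |D| = diag(|d_1|,…,|d_n|). Then for every real t, the 2n×2n Hermitian block matrix [[⟨B⟩, e^{it}B],[e^{-it}B*, ⟨B⟩]] is positive semidefinite. -/
/-!
Each `e^{it} dᵢ` factors as `ūᵢ vᵢ` with `|uᵢ|² = |vᵢ|² = |dᵢ|` (take `uᵢ = √|dᵢ|`). For
`X = diag(u) C` and `Y = diag(v) C` this gives `⟨B⟩ = Xᴴ X = Yᴴ Y`, `e^{it} B = Xᴴ Y` and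
`e^{-it} Bᴴ = Yᴴ X`, so the block matrix is the Gram matrix `[X Y]ᴴ [X Y]`.
-/

open Matrix
open scoped ComplexOrder

theorem Matrix.posSemidef_fromBlocks_gram {m n₁ n₂ R : Type*} [Fintype m] [Finite n₁] [Finite n₂]
    [CommRing R] [PartialOrder R] [StarRing R] [StarOrderedRing R]
    (X : Matrix m n₁ R) (Y : Matrix m n₂ R) :
    (fromBlocks (Xᴴ * X) (Xᴴ * Y) (Yᴴ * X) (Yᴴ * Y)).PosSemidef := by
  rw [← fromRows_mul_fromCols, ← conjTranspose_fromCols_eq_fromRows_conjTranspose]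
  exact posSemidef_conjTranspose_mul_self _

theorem Matrix.conjTranspose_diagonal_mul_mul_diagonal_mul {m n R : Type*} [Fintype m]
    [DecidableEq m] [CommRing R] [StarRing R] (u v : m → R) (C : Matrix m n R) :
    (diagonal u * C)ᴴ * (diagonal v * C) = Cᴴ * diagonal (star u * v) * C := by
  rw [conjTranspose_mul, diagonal_conjTranspose, Matrix.mul_assoc,
    ← Matrix.mul_assoc (diagonal (star u)), diagonal_mul_diagonal, ← Matrix.mul_assoc]
  rfl

theorem Matrix.smul_conjTranspose_mul_diagonal_mul {m n R : Type*} [Fintype m] [DecidableEq m]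
    [CommRing R] [StarRing R] (c : R) (v : m → R) (C : Matrix m n R) :
    c • (Cᴴ * diagonal v * C) = Cᴴ * diagonal (c • v) * C := by
  rw [diagonal_smul, Matrix.mul_smul, Matrix.smul_mul]

namespace Complex

theorem exists_balanced_star_mul_eq (z : ℂ) :
    ∃ u v : ℂ, star u * u = ‖z‖ ∧ star u * v = z ∧ star v * v = ‖z‖ := by
  rcases eq_or_ne z 0 with rfl | hz
  · exact ⟨0, 0, by simp⟩
  set s : ℂ := (Real.sqrt ‖z‖ : ℂ)
  have hs_real : star s = s := conj_ofReal _
  have hss : s * s = ‖z‖ := by rw [← ofReal_mul, Real.mul_self_sqrt (norm_nonneg z)]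
  have hs : s ≠ 0 := by simpa [s] using hz
  have hnorm : (‖z‖ : ℂ) ≠ 0 := by simpa using hz
  refine ⟨s, z / s, by rw [hs_real, hss], by rw [hs_real, mul_div_cancel₀ z hs], ?_⟩
  rw [star_div₀, hs_real, div_mul_div_comm, hss, Complex.star_def, conj_mul', ← ofReal_pow,
    sq, ofReal_mul, mul_div_cancel_right₀ _ hnorm]

theorem star_exp_ofReal_mul_I (t : ℝ) : star (exp (t * I)) = exp (-(t * I)) := by
  rw [Complex.star_def, ← exp_conj, map_mul, conj_ofReal, conj_I, mul_neg]

end Complex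

theorem stmt0_general {n : ℕ} (C : Matrix (Fin n) (Fin n) ℂ)
    (d : Fin n → ℂ) (B : Matrix (Fin n) (Fin n) ℂ)
    (hB : B = Cᴴ * Matrix.diagonal d * C) (t : ℝ) :
    (Matrix.fromBlocks
      (Cᴴ * Matrix.diagonal (fun i => ((‖d i‖ : ℝ) : ℂ)) * C)
      (Complex.exp (t * Complex.I) • B)
      (Complex.exp (-(t * Complex.I)) • Bᴴ)
      (Cᴴ * Matrix.diagonal (fun i => ((‖d i‖ : ℝ) : ℂ)) * C)).PosSemidef := by
  set e := Complex.exp (t * Complex.I)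
  have hnorm : ∀ i, ‖e * d i‖ = ‖d i‖ := fun i => by
    rw [norm_mul, Complex.norm_exp_ofReal_mul_I, one_mul]
  choose u v huu huv hvv using fun i => Complex.exists_balanced_star_mul_eq (e * d i)
  set X := diagonal u * C
  set Y := diagonal v * C
  have hgram : ∀ w : Fin n → ℂ, (∀ i, star (w i) * w i = ‖e * d i‖) →
      (diagonal w * C)ᴴ * (diagonal w * C) = Cᴴ * diagonal (fun i => ((‖d i‖ : ℝ) : ℂ)) * C :=
    fun w hw => by
      rw [conjTranspose_diagonal_mul_mul_diagonal_mul]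
      congr 3 with i
      rw [Pi.mul_apply, Pi.star_apply, hw, hnorm]
  have hXY : Xᴴ * Y = e • B := by
    rw [conjTranspose_diagonal_mul_mul_diagonal_mul, hB, smul_conjTranspose_mul_diagonal_mul]
    congr 3 with i
    rw [Pi.mul_apply, Pi.star_apply, huv, Pi.smul_apply, smul_eq_mul]
  have hYX : Yᴴ * X = Complex.exp (-(t * Complex.I)) • Bᴴ := by
    rw [← conjTranspose_conjTranspose X, ← conjTranspose_mul, hXY, conjTranspose_smul,
      Complex.star_exp_ofReal_mul_I]
  have := posSemidef_fromBlocks_gram X Y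
  rwa [hgram u huu, hXY, hYX, hgram v hvv] at this

theorem stmt0 {n : ℕ} (C : Matrix (Fin n) (Fin n) ℂ) (hC : IsUnit C)
    (d : Fin n → ℂ) (B : Matrix (Fin n) (Fin n) ℂ)
    (hB : B = Cᴴ * Matrix.diagonal d * C) (t : ℝ) :
    (Matrix.fromBlocks
      (Cᴴ * Matrix.diagonal (fun i => ((‖d i‖ : ℝ) : ℂ)) * C)
      (Complex.exp (t * Complex.I) • B)
      (Complex.exp (-(t * Complex.I)) • Bᴴ)
      (Cᴴ * Matrix.diagonal (fun i => ((‖d i‖ : ℝ) : ℂ)) * C)).PosSemidef :=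
  stmt0_general C d B hB t
end

section
/- Let A ∈ ℂ^{n×n} be nonsingular and A = M - N a splitting with M nonsingular such that M*A + A*N is Hermitian positive definite. Then the spectral radius of T = M^{-1}N satisfies ρ(T) < 1. -/
/-!
If `M⁻¹ N x = μ x` with `x ≠ 0`, then `N x = μ M x`. Since `M*A + A*N = M*M - N*N`, the positive
number `x* (M*A + A*N) x` equals `(1 - |μ|²) ‖M x‖²`, which forces `|μ| < 1`.
-/

open Matrix
open scoped ComplexOrder

theorem spectralRadius_lt_of_forall_lt_of_finite {𝕜 A : Type*} [NormedField 𝕜] [Ring A]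
    [Algebra 𝕜 A] {a : A} (ha : (spectrum 𝕜 a).Finite) {r : NNReal} (hr : 0 < r)
    (h : ∀ k ∈ spectrum 𝕜 a, ‖k‖₊ < r) : spectralRadius 𝕜 a < r := by
  have hsup : spectralRadius 𝕜 a = ha.toFinset.sup (fun k => (‖k‖₊ : ENNReal)) := by
    simp [spectralRadius, Finset.sup_eq_iSup]
  rw [hsup, Finset.sup_lt_iff (by simpa using hr)]
  intro k hk
  exact ENNReal.coe_lt_coe.mpr (h k (ha.mem_toFinset.mp hk))

namespace Matrix

variable {ι : Type*} [Fintype ι]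

theorem conjTranspose_mul_sub_add_conjTranspose_sub_mul {R : Type*} [Ring R] [StarRing R]
    (M N : Matrix ι ι R) : Mᴴ * (M - N) + (M - N)ᴴ * N = Mᴴ * M - Nᴴ * N := by
  rw [conjTranspose_sub, Matrix.mul_sub, Matrix.sub_mul]
  abel

theorem norm_lt_one_of_posDef_of_mulVec_eq_smul_mulVec {𝕜 : Type*} [RCLike 𝕜]
    {M N : Matrix ι ι 𝕜} (hpd : (Mᴴ * M - Nᴴ * N).PosDef) {x : ι → 𝕜} (hx : x ≠ 0) {μ : 𝕜}
    (h : N *ᵥ x = μ • M *ᵥ x) : ‖μ‖ < 1 := by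
  have hform : star x ⬝ᵥ (Mᴴ * M - Nᴴ * N) *ᵥ x
      = (1 - ((‖μ‖ ^ 2 : ℝ) : 𝕜)) * (star (M *ᵥ x) ⬝ᵥ M *ᵥ x) := by
    rw [sub_mulVec, dotProduct_sub, ← mulVec_mulVec, ← mulVec_mulVec, dotProduct_mulVec,
      dotProduct_mulVec (star x) Nᴴ, ← star_mulVec, ← star_mulVec, h, star_smul,
      smul_dotProduct, dotProduct_smul, smul_eq_mul, smul_eq_mul, ← mul_assoc, RCLike.star_def,
      RCLike.conj_mul]
    push_cast
    ring
  by_contra! hμ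
  have hcoef : 1 - ((‖μ‖ ^ 2 : ℝ) : 𝕜) ≤ 0 := by
    rw [sub_nonpos, ← RCLike.ofReal_one, RCLike.ofReal_le_ofReal]
    nlinarith
  have hpos := hpd.dotProduct_mulVec_pos hx
  rw [hform] at hpos
  exact (mul_nonpos_of_nonpos_of_nonneg hcoef (dotProduct_star_self_nonneg _)).not_gt hpos

variable [DecidableEq ι]

theorem exists_mulVec_eq_smul_of_mem_spectrum {K : Type*} [Field K] {T : Matrix ι ι K} {μ : K}
    (hμ : μ ∈ spectrum K T) : ∃ x ≠ 0, T *ᵥ x = μ • x := by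
  rw [← spectrum_toLin', ← Module.End.hasEigenvalue_iff_mem_spectrum] at hμ
  obtain ⟨x, hx⟩ := hμ.exists_hasEigenvector
  exact ⟨x, hx.2, by simpa using hx.apply_eq_smul⟩

theorem mulVec_eq_smul_mulVec_of_inv_mul_mulVec_eq_smul {K : Type*} [Field K]
    {M N : Matrix ι ι K} (hM : IsUnit M) {x : ι → K} {μ : K} (h : (M⁻¹ * N) *ᵥ x = μ • x) :
    N *ᵥ x = μ • M *ᵥ x := by
  rw [← mulVec_smul, ← h, mulVec_mulVec,
    mul_nonsing_inv_cancel_left _ _ ((isUnit_iff_isUnit_det M).mp hM)]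

theorem spectralRadius_inv_mul_lt_one_of_posDef {𝕜 : Type*} [RCLike 𝕜] {M N : Matrix ι ι 𝕜}
    (hM : IsUnit M) (hpd : (Mᴴ * M - Nᴴ * N).PosDef) : spectralRadius 𝕜 (M⁻¹ * N) < 1 := by
  refine spectralRadius_lt_of_forall_lt_of_finite (finite_spectrum _) one_pos fun μ hμ => ?_
  obtain ⟨x, hx, hxμ⟩ := exists_mulVec_eq_smul_of_mem_spectrum hμ
  exact_mod_cast norm_lt_one_of_posDef_of_mulVec_eq_smul_mulVec hpd hx
    (mulVec_eq_smul_mulVec_of_inv_mul_mulVec_eq_smul hM hxμ)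

end Matrix

theorem stmt2_general {n : ℕ} (A M N : Matrix (Fin n) (Fin n) ℂ)
    (hM : IsUnit M) (hMN : A = M - N)
    (hpd : (Mᴴ * A + Aᴴ * N).PosDef) :
    spectralRadius ℂ (M⁻¹ * N) < 1 := by
  subst hMN
  rw [conjTranspose_mul_sub_add_conjTranspose_sub_mul] at hpd
  exact spectralRadius_inv_mul_lt_one_of_posDef hM hpd

theorem stmt2 {n : ℕ} (A M N : Matrix (Fin n) (Fin n) ℂ)
    (hA : IsUnit A) (hM : IsUnit M) (hMN : A = M - N)
    (hpd : (Mᴴ * A + Aᴴ * N).PosDef) :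
    spectralRadius ℂ (M⁻¹ * N) < 1 :=
  stmt2_general A M N hM hMN hpd
end

section
/- Let A ∈ ℂ^{n×n} and let A = M - N with A and M nonsingular, T = M^{-1}N. Then A - T*AT = (I - T*)(M*(A^{-1})*A + N)(I - T). -/
open Matrix

/-- The splitting identity for `A = M - N`, `T = M⁻¹ N`, written through `N = M * T`. -/
theorem sub_star_mul_mul_eq_of_mul_eq_one {R : Type*} [Ring R] [StarRing R] (A M T B : R)
    (hA : A = M * (1 - T)) (hB : B * A = 1) :
    A - star T * A * T = (1 - star T) * (star M * star B * A + M * T) * (1 - T) := by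
  have hstar : (1 - star T) * star M = star A := by
    rw [hA, star_mul, star_sub, star_one]
  have hcancel : (1 - star T) * (star M * star B * A) = A := by
    rw [← mul_assoc, ← mul_assoc, hstar, ← star_mul, hB, star_one, one_mul]
  rw [mul_add, add_mul, hcancel, hA]
  -- both sides differ by `(1 - T*) M ((1 - T) T - T (1 - T)) = 0`
  noncomm_ring

theorem stmt4 {n : ℕ} (A M N : Matrix (Fin n) (Fin n) ℂ)
    (hA : IsUnit A) (hM : IsUnit M) (hMN : A = M - N) :
    A - (M⁻¹ * N)ᴴ * A * (M⁻¹ * N) =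
      (1 - (M⁻¹ * N)ᴴ) * (Mᴴ * (A⁻¹)ᴴ * A + N) * (1 - M⁻¹ * N) := by
  have hN : M * (M⁻¹ * N) = N :=
    mul_nonsing_inv_cancel_left M N ((isUnit_iff_isUnit_det M).mp hM)
  have hAinv : A⁻¹ * A = 1 := nonsing_inv_mul A ((isUnit_iff_isUnit_det A).mp hA)
  have hsplit : A = M * (1 - M⁻¹ * N) := by rw [mul_sub, mul_one, hN, hMN]
  simpa only [hN, star_eq_conjTranspose] using
    sub_star_mul_mul_eq_of_mul_eq_one A M (M⁻¹ * N) A⁻¹ hsplit hAinv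
end

section
/- Let A ∈ ℂ^{n×n} be nonsingular and A = M - N with M nonsingular. If for all real t the Hermitian matrix A_t := M + M* - (e^{it}N + e^{-it}N*) is positive definite, then ρ(M^{-1}N) < 1. If A_t is positive semidefinite for all real t, then ρ(M^{-1}N) ≤ 1. -/
/-!
Let `N x = λ M x` with `x ≠ 0` and put `m = x* M x`. Then `x* A_t x = 2 Re((1 - e^{it} λ) m)`, and
choosing `t` to rotate `λ m` onto the positive real axis gives `x* A_t x ≤ 2 |m| (1 - |λ|)`.
Positive definiteness of `A_t` therefore forces `|λ| < 1`. Under semidefiniteness alone, `|λ| > 1`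
would force `m = 0`, hence `x* A_t x = 0` and so `A_t x = 0` for every `t`; comparing the
coefficients of `e^{it}` gives `N x = 0`, hence `M x = 0`, contradicting the invertibility of `M`.
-/

open Complex Matrix
open scoped ComplexOrder ENNReal

theorem spectralRadius_lt_of_finite {𝕜 A : Type*} [NormedField 𝕜] [Ring A] [Algebra 𝕜 A]
    {a : A} (hfin : (spectrum 𝕜 a).Finite) {r : ℝ≥0∞} (hr : 0 < r)
    (h : ∀ k ∈ spectrum 𝕜 a, (‖k‖₊ : ℝ≥0∞) < r) : spectralRadius 𝕜 a < r := by
  rcases (spectrum 𝕜 a).eq_empty_or_nonempty with hempty | hne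
  · simpa [spectralRadius, hempty] using hr
  · obtain ⟨k, hk, hmax⟩ := Set.exists_max_image _ (fun k => (‖k‖₊ : ℝ≥0∞)) hfin hne
    exact (iSup₂_le hmax).trans_lt (h k hk)

theorem eq_zero_of_forall_exp_smul_add_exp_neg_smul_eq {V : Type*} [AddCommGroup V]
    [Module ℂ V] {u v w : V} (h : ∀ t : ℝ, exp (t * I) • v + exp (-(t * I)) • w = u) :
    v = 0 := by
  have h₀ := h 0
  have h₁ := h Real.pi
  have h₂ := h (Real.pi / 2)
  simp only [ofReal_zero, zero_mul, neg_zero, Complex.exp_zero, one_smul] at h₀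
  simp only [exp_pi_mul_I, exp_neg_pi_mul_I, neg_one_smul] at h₁
  rw [← neg_mul, ← ofReal_neg, exp_mul_I, exp_mul_I] at h₂
  simp only [ofReal_div, ofReal_ofNat, cos_pi_div_two, sin_pi_div_two, one_mul, zero_add,
    ofReal_neg, cos_neg, sin_neg, neg_mul, neg_smul] at h₂
  linear_combination (norm := skip) ((1 + I) / 4) • h₀ + ((I - 1) / 4) • h₁ + (-I / 2) • h₂
  match_scalars <;> ring_nf <;> simp [I_sq]

namespace Matrix

theorem exists_mulVec_eq_smul_mulVec_of_mem_spectrum {ι K : Type*} [Fintype ι] [DecidableEq ι]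
    [Field K] {M N : Matrix ι ι K} (hM : IsUnit M) {k : K} (hk : k ∈ spectrum K (M⁻¹ * N)) :
    ∃ x ≠ 0, N *ᵥ x = k • M *ᵥ x := by
  rw [← spectrum_toLin', ← Module.End.hasEigenvalue_iff_mem_spectrum] at hk
  obtain ⟨x, hx⟩ := hk.exists_hasEigenvector
  refine ⟨x, hx.2, ?_⟩
  have hx' : (M⁻¹ * N) *ᵥ x = k • x := by simpa only [toLin'_apply] using hx.apply_eq_smul
  rw [← mulVec_smul, ← hx', mulVec_mulVec, ← mul_assoc,
    mul_nonsing_inv _ ((isUnit_iff_isUnit_det M).mp hM), one_mul]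

variable {ι : Type*}

/-- The matrix `A_t` of the splitting `A = M - N`. -/
noncomputable def rotatedSplitting (M N : Matrix ι ι ℂ) (t : ℝ) : Matrix ι ι ℂ :=
  M + Mᴴ - (exp (t * I) • N + exp (-(t * I)) • Nᴴ)

theorem rotatedSplitting_eq_add_conjTranspose (M N : Matrix ι ι ℂ) (t : ℝ) :
    rotatedSplitting M N t = (M - exp (t * I) • N) + (M - exp (t * I) • N)ᴴ := by
  have : star (exp (t * I)) = exp (-(t * I)) := by
    rw [star_def, ← Complex.exp_conj, map_mul, conj_ofReal, conj_I, mul_neg]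
  rw [rotatedSplitting, conjTranspose_sub, conjTranspose_smul, this]
  abel

variable [Fintype ι]

theorem star_dotProduct_conjTranspose_mulVec (P : Matrix ι ι ℂ) (x : ι → ℂ) :
    star x ⬝ᵥ Pᴴ *ᵥ x = star (star x ⬝ᵥ P *ᵥ x) := by
  rw [dotProduct_mulVec, ← star_mulVec, star_dotProduct]

theorem star_dotProduct_rotatedSplitting_mulVec {M N : Matrix ι ι ℂ} {x : ι → ℂ} {k : ℂ}
    (hNx : N *ᵥ x = k • M *ᵥ x) (t : ℝ) :
    star x ⬝ᵥ rotatedSplitting M N t *ᵥ x =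
      (2 * ((1 - exp (t * I) * k) * (star x ⬝ᵥ M *ᵥ x)).re : ℝ) := by
  have hB : star x ⬝ᵥ (M - exp (t * I) • N) *ᵥ x =
      (1 - exp (t * I) * k) * (star x ⬝ᵥ M *ᵥ x) := by
    rw [sub_mulVec, smul_mulVec, hNx, dotProduct_sub, dotProduct_smul, dotProduct_smul,
      smul_eq_mul, smul_eq_mul]
    ring
  rw [rotatedSplitting_eq_add_conjTranspose, add_mulVec, dotProduct_add,
    star_dotProduct_conjTranspose_mulVec, hB, star_def, add_conj]

theorem exists_re_star_dotProduct_rotatedSplitting_mulVec_le {M N : Matrix ι ι ℂ} {x : ι → ℂ}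
    {k : ℂ} (hNx : N *ᵥ x = k • M *ᵥ x) :
    ∃ t : ℝ, (star x ⬝ᵥ rotatedSplitting M N t *ᵥ x).re ≤
      2 * ‖star x ⬝ᵥ M *ᵥ x‖ * (1 - ‖k‖) := by
  set m := star x ⬝ᵥ M *ᵥ x
  refine ⟨-(k * m).arg, ?_⟩
  have hrot : exp (↑(-(k * m).arg) * I) * (k * m) = ‖k * m‖ := by
    nth_rewrite 2 [← norm_mul_exp_arg_mul_I (k * m)]
    rw [ofReal_neg, neg_mul, Complex.exp_neg]
    field_simp
  have hre : ((1 - exp (↑(-(k * m).arg) * I) * k) * m).re = m.re - ‖k‖ * ‖m‖ := by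
    rw [sub_mul, one_mul, mul_assoc, hrot, sub_re, ofReal_re, norm_mul]
  rw [star_dotProduct_rotatedSplitting_mulVec hNx, ofReal_re, hre]
  linarith [re_le_norm m]

theorem norm_lt_one_of_forall_posDef_rotatedSplitting {M N : Matrix ι ι ℂ} {x : ι → ℂ} {k : ℂ}
    (hx : x ≠ 0) (hNx : N *ᵥ x = k • M *ᵥ x) (h : ∀ t, (rotatedSplitting M N t).PosDef) :
    ‖k‖ < 1 := by
  obtain ⟨t, ht⟩ := exists_re_star_dotProduct_rotatedSplitting_mulVec_le hNx
  have hpos : 0 < (star x ⬝ᵥ rotatedSplitting M N t *ᵥ x).re :=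
    (RCLike.pos_iff.mp ((h t).dotProduct_mulVec_pos hx)).1
  nlinarith [norm_nonneg (star x ⬝ᵥ M *ᵥ x)]

theorem norm_le_one_of_forall_posSemidef_rotatedSplitting [DecidableEq ι]
    {M N : Matrix ι ι ℂ} (hM : IsUnit M) {x : ι → ℂ} {k : ℂ} (hx : x ≠ 0)
    (hNx : N *ᵥ x = k • M *ᵥ x) (h : ∀ t, (rotatedSplitting M N t).PosSemidef) :
    ‖k‖ ≤ 1 := by
  by_contra! hk
  have hm : star x ⬝ᵥ M *ᵥ x = 0 := by
    obtain ⟨t, ht⟩ := exists_re_star_dotProduct_rotatedSplitting_mulVec_le hNx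
    have hnonneg : 0 ≤ (star x ⬝ᵥ rotatedSplitting M N t *ᵥ x).re :=
      (RCLike.nonneg_iff.mp ((h t).dotProduct_mulVec_nonneg x)).1
    exact norm_eq_zero.mp (by nlinarith [norm_nonneg (star x ⬝ᵥ M *ᵥ x)])
  have hAx : ∀ t, rotatedSplitting M N t *ᵥ x = 0 := fun t =>
    ((h t).dotProduct_mulVec_zero_iff x).mp (by
      rw [star_dotProduct_rotatedSplitting_mulVec hNx, hm, mul_zero, zero_re, mul_zero,
        ofReal_zero])
  have hN : N *ᵥ x = 0 := eq_zero_of_forall_exp_smul_add_exp_neg_smul_eq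
    (u := (M + Mᴴ) *ᵥ x) (w := Nᴴ *ᵥ x) fun t => by
      rw [eq_comm, ← sub_eq_zero, ← hAx t, rotatedSplitting, sub_mulVec, add_mulVec (_ • N),
        smul_mulVec, smul_mulVec]
  have hMx : M *ᵥ x = 0 := by
    rw [hNx] at hN
    exact (smul_eq_zero.mp hN).resolve_left (norm_pos_iff.mp (by linarith))
  exact hx (mulVec_injective_iff_isUnit.mpr hM (hMx.trans (mulVec_zero M).symm))

end Matrix

theorem stmt7_general {n : ℕ} (M N : Matrix (Fin n) (Fin n) ℂ)
    (hM : IsUnit M) :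
    ((∀ t : ℝ, (M + Mᴴ - (Complex.exp (t * Complex.I) • N +
        Complex.exp (-(t * Complex.I)) • Nᴴ)).PosDef) →
      spectralRadius ℂ (M⁻¹ * N) < 1) ∧
    ((∀ t : ℝ, (M + Mᴴ - (Complex.exp (t * Complex.I) • N +
        Complex.exp (-(t * Complex.I)) • Nᴴ)).PosSemidef) →
      spectralRadius ℂ (M⁻¹ * N) ≤ 1) := by
  refine ⟨fun hPD => ?_, fun hPSD => ?_⟩
  · refine spectralRadius_lt_of_finite (M⁻¹ * N).finite_spectrum one_pos fun k hk => ?_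
    obtain ⟨x, hx, hNx⟩ := exists_mulVec_eq_smul_mulVec_of_mem_spectrum hM hk
    exact_mod_cast norm_lt_one_of_forall_posDef_rotatedSplitting hx hNx hPD
  · refine iSup₂_le fun k hk => ?_
    obtain ⟨x, hx, hNx⟩ := exists_mulVec_eq_smul_mulVec_of_mem_spectrum hM hk
    exact_mod_cast norm_le_one_of_forall_posSemidef_rotatedSplitting hM hx hNx hPSD

theorem stmt7 {n : ℕ} (A M N : Matrix (Fin n) (Fin n) ℂ)
    (hA : IsUnit A) (hM : IsUnit M) (hMN : A = M - N) :
    ((∀ t : ℝ, (M + Mᴴ - (Complex.exp (t * Complex.I) • N +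
        Complex.exp (-(t * Complex.I)) • Nᴴ)).PosDef) →
      spectralRadius ℂ (M⁻¹ * N) < 1) ∧
    ((∀ t : ℝ, (M + Mᴴ - (Complex.exp (t * Complex.I) • N +
        Complex.exp (-(t * Complex.I)) • Nᴴ)).PosSemidef) →
      spectralRadius ℂ (M⁻¹ * N) ≤ 1) :=
  stmt7_general M N hM
end

section
/- Let A ∈ ℂ^{n×n} with multisplitting A = M_k - N_k (M_k nonsingular) and weighting matrices E_k, k = 1,…,m, with Σ_k E_k = I. Define T = Σ_{k=1}^m E_k M_k^{-1} N_k, and the nm×nm block matrices B = diag(M_1,…,M_m) and C = [N_i E_j]_{i,j=1}^m. Then ρ(T) = ρ(B^{-1}C). -/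
/-! With `X` the block row `[E₁ ⋯ Eₘ]` and `Y` the block column of the `Mₖ⁻¹Nₖ`, the matrix
`C = [Nᵢ Eⱼ]` is the block column of the `Nᵢ` times `X`, so `B⁻¹C = YX`, while `XY = T`.
Since `XY` and `YX` have the same nonzero eigenvalues (`λ^{nm} χ_{XY} = λ^n χ_{YX}`),
their spectral radii agree. -/

open Matrix Polynomial

theorem spectralRadius_eq_iSup_spectrum_sdiff_zero {𝕜 A : Type*} [NormedField 𝕜]
    [Ring A] [Algebra 𝕜 A] (a : A) :
    spectralRadius 𝕜 a = ⨆ k ∈ spectrum 𝕜 a \ {0}, (‖k‖₊ : ENNReal) := by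
  refine le_antisymm (iSup₂_le fun k hk => ?_) (biSup_mono fun k hk => hk.1)
  rcases eq_or_ne k 0 with rfl | hk0
  · simp
  · exact le_iSup₂ (f := fun k (_ : k ∈ spectrum 𝕜 a \ {0}) => (‖k‖₊ : ENNReal)) k ⟨hk, hk0⟩

namespace Matrix

variable {α l l' n n' o o' : Type*}

theorem spectrum_mul_comm_sdiff_zero [Field α] [Fintype l] [DecidableEq l]
    [Fintype n] [DecidableEq n] (A : Matrix l n α) (B : Matrix n l α) :
    spectrum α (A * B) \ {0} = spectrum α (B * A) \ {0} := by
  ext r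
  simp only [Set.mem_sdiff, Set.mem_singleton_iff, mem_spectrum_iff_isRoot_charpoly, IsRoot.def]
  refine and_congr_left fun hr => ?_
  have h := congrArg (eval r) (charpoly_mul_comm' A B)
  simp only [eval_mul, eval_pow, eval_X] at h
  constructor <;> intro h' <;> simpa [h', hr] using h

theorem spectralRadius_mul_comm [NormedField α] [Fintype l] [DecidableEq l]
    [Fintype n] [DecidableEq n] (A : Matrix l n α) (B : Matrix n l α) :
    spectralRadius α (A * B) = spectralRadius α (B * A) := by
  rw [spectralRadius_eq_iSup_spectrum_sdiff_zero, spectralRadius_eq_iSup_spectrum_sdiff_zero,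
    spectrum_mul_comm_sdiff_zero]

def blockRow (E : o → Matrix l n α) : Matrix l (n × o) α :=
  of fun i q => E q.2 i q.1

def blockCol (F : o → Matrix n l α) : Matrix (n × o) l α :=
  of fun p j => F p.2 p.1 j

theorem blockRow_mul_blockCol [NonUnitalNonAssocSemiring α] [Fintype n] [Fintype o]
    (E : o → Matrix l n α) (F : o → Matrix n l' α) :
    blockRow E * blockCol F = ∑ k, E k * F k := by
  ext i j
  simp only [mul_apply, Fintype.sum_prod_type, blockRow, blockCol, of_apply, sum_apply]
  exact Finset.sum_comm

theorem blockCol_mul_blockRow [NonUnitalNonAssocSemiring α] [Fintype l]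
    (F : o' → Matrix n' l α) (E : o → Matrix l n α) :
    blockCol F * blockRow E = of fun p q => (F p.2 * E q.2) p.1 q.1 := by
  ext p q
  simp only [mul_apply, blockRow, blockCol, of_apply]

theorem blockDiagonal_mul_blockCol [NonUnitalNonAssocSemiring α] [Fintype n] [Fintype o]
    [DecidableEq o] (D : o → Matrix n' n α) (F : o → Matrix n l α) :
    blockDiagonal D * blockCol F = blockCol fun k => D k * F k := by
  ext ⟨i, k⟩ j
  simp [mul_apply, Fintype.sum_prod_type, blockCol, blockDiagonal_apply]

theorem inv_blockDiagonal [CommRing α] [Fintype n] [DecidableEq n] [Fintype o] [DecidableEq o]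
    {M : o → Matrix n n α} (hM : ∀ k, IsUnit (M k)) :
    (blockDiagonal M)⁻¹ = blockDiagonal fun k => (M k)⁻¹ := by
  refine inv_eq_left_inv ?_
  rw [← blockDiagonal_mul]
  simp only [fun k => nonsing_inv_mul _ ((isUnit_iff_isUnit_det _).mp (hM k))]
  exact blockDiagonal_one

end Matrix

theorem stmt8_general {n m : ℕ}
    (M N E : Fin m → Matrix (Fin n) (Fin n) ℂ)
    (hM : ∀ k, IsUnit (M k)) :
    spectralRadius ℂ (∑ k, E k * ((M k)⁻¹ * N k)) =
      spectralRadius ℂ ((Matrix.blockDiagonal M)⁻¹ *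
        Matrix.of (fun p q : Fin n × Fin m => (N p.2 * E q.2) p.1 q.1)) := by
  rw [← blockCol_mul_blockRow, ← Matrix.mul_assoc, inv_blockDiagonal hM, blockDiagonal_mul_blockCol,
    spectralRadius_mul_comm, blockRow_mul_blockCol]

theorem stmt8 {n m : ℕ} (A : Matrix (Fin n) (Fin n) ℂ)
    (M N E : Fin m → Matrix (Fin n) (Fin n) ℂ)
    (hM : ∀ k, IsUnit (M k)) (hsplit : ∀ k, A = M k - N k)
    (hE : ∑ k, E k = 1) :
    spectralRadius ℂ (∑ k, E k * ((M k)⁻¹ * N k)) =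
      spectralRadius ℂ ((Matrix.blockDiagonal M)⁻¹ *
        Matrix.of (fun p q : Fin n × Fin m => (N p.2 * E q.2) p.1 q.1)) :=
  stmt8_general M N E hM
end

section
/- Let M_1,…,M_m ∈ ℂ^{n×n} be nonsingular, A ∈ ℂ^{n×n} nonsingular, and β_1,…,β_m ≥ 0 with Σβ_k = 1. Then the Hermitian matrix S₂* + S₂ is positive semidefinite, where S₂ = Σ_{k≠j} β_k β_j A*(M_k^{-1})* A*A (M_k^{-1} - M_j^{-1}) A. -/
/-!
Put `Y k = A (M k)⁻¹ A`, so that `S₂ = ∑ β_k β_j Y_kᴴ (Y_k - Y_j)` (the diagonal terms vanish, so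
the sum may run over all pairs). Adding the adjoint and subtracting
`∑ β_k β_j (Y_k - Y_j)ᴴ (Y_k - Y_j)` leaves `∑ β_k β_j (Y_kᴴ Y_k - Y_jᴴ Y_j)`, which is zero because
the weights `β_k β_j` are symmetric. Hence `S₂ᴴ + S₂` is a nonnegative combination of Gram matrices.
-/

open Matrix
open scoped ComplexOrder

theorem star_sum_add_sum_smul_star_mul_sub {ι R : Type*} [Ring R] [StarRing R] [Algebra ℝ R]
    [StarModule ℝ R] (s : Finset ι) (c : ι → ι → ℝ) (hc : ∀ k j, c k j = c j k) (Y : ι → R) :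
    star (∑ k ∈ s, ∑ j ∈ s, c k j • (star (Y k) * (Y k - Y j)))
        + ∑ k ∈ s, ∑ j ∈ s, c k j • (star (Y k) * (Y k - Y j))
      = ∑ k ∈ s, ∑ j ∈ s, c k j • (star (Y k - Y j) * (Y k - Y j)) := by
  have hdiag : ∑ k ∈ s, ∑ j ∈ s, c k j • (star (Y k) * Y k)
      = ∑ k ∈ s, ∑ j ∈ s, c k j • (star (Y j) * Y j) := by
    rw [Finset.sum_comm]
    simp_rw [hc]
  rw [← sub_eq_zero, ← sub_eq_zero_of_eq hdiag]
  simp only [star_sum, star_smul, star_trivial, ← Finset.sum_add_distrib, ← Finset.sum_sub_distrib,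
    ← smul_add, ← smul_sub]
  refine Finset.sum_congr rfl fun k _ => Finset.sum_congr rfl fun j _ => ?_
  congr 1
  simp only [star_mul, star_sub, star_star]
  noncomm_ring

theorem Matrix.posSemidef_sum_smul_conjTranspose_mul_self {ι n : Type*} [Fintype n]
    (s : Finset ι) (c : ι → ℝ) (hc : ∀ i ∈ s, 0 ≤ c i) (D : ι → Matrix n n ℂ) :
    (∑ i ∈ s, c i • ((D i)ᴴ * D i)).PosSemidef :=
  posSemidef_sum s fun i hi => (posSemidef_conjTranspose_mul_self (D i)).smul (hc i hi)

theorem stmt19_general {n m : ℕ} (A : Matrix (Fin n) (Fin n) ℂ)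
    (M : Fin m → Matrix (Fin n) (Fin n) ℂ)
    (β : Fin m → ℝ) (hβ : ∀ k, 0 ≤ β k) :
    (let S₂ : Matrix (Fin n) (Fin n) ℂ :=
      ∑ k, ∑ j ∈ Finset.univ.erase k,
        ((β k * β j : ℝ) : ℂ) •
          (Aᴴ * ((M k)⁻¹)ᴴ * Aᴴ * A * ((M k)⁻¹ - (M j)⁻¹) * A);
    (S₂ᴴ + S₂).PosSemidef) := by
  intro S₂
  set Y : Fin m → Matrix (Fin n) (Fin n) ℂ := fun k => A * (M k)⁻¹ * A
  have hS₂ : S₂ = ∑ k, ∑ j, (β k * β j) • (star (Y k) * (Y k - Y j)) := by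
    refine Finset.sum_congr rfl fun k _ => ?_
    rw [Finset.sum_erase _ (by simp)]
    refine Finset.sum_congr rfl fun j _ => ?_
    rw [← Complex.coe_smul]
    simp only [Y, star_eq_conjTranspose, conjTranspose_mul, mul_sub, sub_mul, Matrix.mul_assoc]
  rw [← star_eq_conjTranspose, hS₂,
    star_sum_add_sum_smul_star_mul_sub _ _ (fun k j => mul_comm _ _)]
  exact posSemidef_sum _ fun k _ => posSemidef_sum_smul_conjTranspose_mul_self _ _
    (fun j _ => mul_nonneg (hβ k) (hβ j)) _

theorem stmt19 {n m : ℕ} (A : Matrix (Fin n) (Fin n) ℂ) (hA : IsUnit A)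
    (M : Fin m → Matrix (Fin n) (Fin n) ℂ) (hM : ∀ k, IsUnit (M k))
    (β : Fin m → ℝ) (hβ : ∀ k, 0 ≤ β k) (hsum : ∑ k, β k = 1) :
    (let S₂ : Matrix (Fin n) (Fin n) ℂ :=
      ∑ k, ∑ j ∈ Finset.univ.erase k,
        ((β k * β j : ℝ) : ℂ) •
          (Aᴴ * ((M k)⁻¹)ᴴ * Aᴴ * A * ((M k)⁻¹ - (M j)⁻¹) * A);
    (S₂ᴴ + S₂).PosSemidef) :=
  stmt19_general A M β hβ
end
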